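/- Let (X_0^T, Y_0^T) be a pair of jointly distributed continuous-time stochastic processes, and let φ be a strictly increasing continuous function on [0,T]. Define time-dilated processes by (X̃_{φ(t)}, Ỹ_{φ(t)}) = (X_t, Y_t) for t ∈ [0,T). Then I(X_0^T → Y_0^T) = I(X̃_{φ(0)}^{φ(T)} → Ỹ_{φ(0)}^{φ(T)}). In particular, for α > 0, if X̃_t = X_{tα} and Ỹ_t = Y_{tα}, then I(X̃_0^{T/α} → Ỹ_0^{T/α}) = I(X_0^T → Y_0^T). -/

import Mathlib

open MeasureTheory ProbabilityTheory Real Set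
open scoped ENNReal NNReal

noncomputable section


namespace CTDI

variable {Ω : Type*} [MeasurableSpace Ω]

/-- Relative entropy (Kullback--Leibler divergence) `D(P ‖ Q)`. -/
def relEnt {α : Type*} [MeasurableSpace α] (P Q : Measure α) : ℝ≥0∞ :=
  open Classical in
  if P ≪ Q ∧ Integrable (fun x => Real.log (P.rnDeriv Q x).toReal) P then
    ENNReal.ofReal (∫ x, Real.log (P.rnDeriv Q x).toReal ∂P)
  else ⊤

/-- Mutual information `I(U;V) = D(P_{U,V} ‖ P_U × P_V)`. -/
def mutInfo {α β : Type*} [MeasurableSpace α] [MeasurableSpace β]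
    (μ : Measure Ω) (U : Ω → α) (V : Ω → β) : ℝ≥0∞ :=
  relEnt (μ.map fun ω => (U ω, V ω)) ((μ.map U).prod (μ.map V))

/-- Conditional mutual information `I(U;V|W)` à la Wyner: the supremum over all finite
quantizations `f`, `g` of `U` and `V` of `I([U]; [V], W) - I([U]; W)`. -/
def condMI {α β γ : Type*} [MeasurableSpace α] [MeasurableSpace β] [MeasurableSpace γ]
    (μ : Measure Ω) (U : Ω → α) (V : Ω → β) (W : Ω → γ) : ℝ≥0∞ :=
  ⨆ (k : ℕ) (l : ℕ) (f : α → Fin k) (g : β → Fin l)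
      (_ : Measurable f) (_ : Measurable g),
    mutInfo μ (fun ω => f (U ω)) (fun ω => (g (V ω), W ω)) -
      mutInfo μ (fun ω => f (U ω)) W

/-- The restriction `Z_a^b = {Z_s : a ≤ s < b}` of a continuous-time process,
viewed as a random object valued in the function space `Ico a b → E`. -/
def seg {E : Type*} (Z : ℝ → Ω → E) (a b : ℝ) : Ω → (Ico a b → E) :=
  fun ω s => Z s.1 ω

/-- A finite partition `a = t_0 < t_1 < ⋯ < t_n = b` of the interval `[a,b)`. -/
structure Partn (a b : ℝ) where
  n : ℕ
  t : ℕ → ℝ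
  mono : ∀ i < n, t i < t (i + 1)
  first : t 0 = a
  last : t n = b

/-- `I_t(X_a^b → Y_a^b) = Σ_{i=1}^n I(Y_{t_{i-1}}^{t_i}; X_a^{t_i} | Y_a^{t_{i-1}})`. -/
def dInfoP {E F : Type*} [MeasurableSpace E] [MeasurableSpace F] (μ : Measure Ω)
    (X : ℝ → Ω → E) (Y : ℝ → Ω → F) {a b : ℝ} (P : Partn a b) : ℝ≥0∞ :=
  ∑ i ∈ Finset.range P.n,
    condMI μ (seg Y (P.t i) (P.t (i + 1))) (seg X a (P.t (i + 1))) (seg Y a (P.t i))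

/-- Directed information in continuous time:
`I(X_a^b → Y_a^b) = inf_t I_t(X_a^b → Y_a^b)` over all finite partitions of `[a,b)`. -/
def dInfo {E F : Type*} [MeasurableSpace E] [MeasurableSpace F] (μ : Measure Ω)
    (X : ℝ → Ω → E) (Y : ℝ → Ω → F) (a b : ℝ) : ℝ≥0∞ :=
  ⨅ P : Partn a b, dInfoP μ X Y P

/-!
A strictly increasing continuous `φ` maps `[a, b]` bijectively and monotonically onto
`[φ a, φ b]`, so it carries partitions of `[a, b)` to partitions of `[φ a, φ b)` and each
segment `[s, u)` onto `[φ s, φ u)`. The segments of the dilated processes are thus the original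
segments transported along measurable isomorphisms of path spaces, and conditional mutual
information is invariant under such isomorphisms because relative entropy is invariant under
pushforward along measurable embeddings. Hence every `I_t` on one side is an `I_t` on the other.
-/

theorem _root_.MeasurableEmbedding.map_map {α β : Type*} [MeasurableSpace α] [MeasurableSpace β]
    {f : α → β} (hf : MeasurableEmbedding f) (μ : Measure Ω) (U : Ω → α) :
    (μ.map U).map f = μ.map (fun ω => f (U ω)) := by
  by_cases hU : AEMeasurable U μ
  · exact hf.measurable.aemeasurable.map_map_of_aemeasurable hU
  · have hfU : ¬ AEMeasurable (fun ω => f (U ω)) μ := fun h => hU (hf.aemeasurable_comp_iff.mp h)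
    rw [Measure.map_of_not_aemeasurable hU, Measure.map_of_not_aemeasurable hfU,
      Measure.map_zero]

theorem _root_.MeasurableEmbedding.absolutelyContinuous_map_iff {α β : Type*}
    [MeasurableSpace α] [MeasurableSpace β] {f : α → β} (hf : MeasurableEmbedding f)
    {P Q : Measure α} : P.map f ≪ Q.map f ↔ P ≪ Q := by
  refine ⟨fun h s hs => ?_, hf.absolutelyContinuous_map⟩
  have h' := h (s := f '' s) (by rwa [hf.map_apply, hf.injective.preimage_image])
  rwa [hf.map_apply, hf.injective.preimage_image] at h'

theorem relEnt_map {α β : Type*} [MeasurableSpace α] [MeasurableSpace β] {f : α → β}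
    (hf : MeasurableEmbedding f) (P Q : Measure α) [SigmaFinite P] [SigmaFinite Q] :
    relEnt (P.map f) (Q.map f) = relEnt P Q := by
  by_cases hPQ : P ≪ Q
  · have hllr : (fun x => Real.log ((P.map f).rnDeriv (Q.map f) (f x)).toReal)
        =ᵐ[P] fun x => Real.log (P.rnDeriv Q x).toReal := by
      filter_upwards [hPQ.ae_le (hf.rnDeriv_map P Q)] with x hx
      rw [hx]
    have hint : Integrable (fun y => Real.log ((P.map f).rnDeriv (Q.map f) y).toReal) (P.map f)
        ↔ Integrable (fun x => Real.log (P.rnDeriv Q x).toReal) P :=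
      hf.integrable_map_iff.trans (integrable_congr hllr)
    have hval : ∫ y, Real.log ((P.map f).rnDeriv (Q.map f) y).toReal ∂(P.map f)
        = ∫ x, Real.log (P.rnDeriv Q x).toReal ∂P :=
      (hf.integral_map _).trans (integral_congr_ae hllr)
    rw [relEnt, relEnt, hval]
    classical
    exact if_congr (and_congr hf.absolutelyContinuous_map_iff hint) rfl rfl
  · rw [relEnt, relEnt, if_neg fun h => hPQ (hf.absolutelyContinuous_map_iff.mp h.1),
      if_neg fun h => hPQ h.1]

theorem mutInfo_comp {α β α' β' : Type*} [MeasurableSpace α] [MeasurableSpace β]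
    [MeasurableSpace α'] [MeasurableSpace β'] {f : α → α'} {g : β → β'}
    (hf : MeasurableEmbedding f) (hg : MeasurableEmbedding g)
    (μ : Measure Ω) [IsFiniteMeasure μ] (U : Ω → α) (V : Ω → β) :
    mutInfo μ (fun ω => f (U ω)) (fun ω => g (V ω)) = mutInfo μ U V := by
  rw [mutInfo, mutInfo, ← hf.map_map, ← hg.map_map,
    Measure.map_prod_map _ _ hf.measurable hg.measurable, ← relEnt_map (hf.prodMap hg),
    (hf.prodMap hg).map_map]
  rfl

theorem condMI_comp_le {α β γ α' β' γ' : Type*} [MeasurableSpace α] [MeasurableSpace β]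
    [MeasurableSpace γ] [MeasurableSpace α'] [MeasurableSpace β'] [MeasurableSpace γ']
    {f : α → α'} {g : β → β'} {h : γ → γ'} (hf : Measurable f) (hg : Measurable g)
    (hh : MeasurableEmbedding h) (μ : Measure Ω) [IsFiniteMeasure μ]
    (U : Ω → α) (V : Ω → β) (W : Ω → γ) :
    condMI μ (fun ω => f (U ω)) (fun ω => g (V ω)) (fun ω => h (W ω)) ≤ condMI μ U V W := by
  refine iSup_le fun k => iSup_le fun l => iSup_le fun p => iSup_le fun q =>
    iSup_le fun hp => iSup_le fun hq => ?_
  have hjoint : mutInfo μ (fun ω => p (f (U ω))) (fun ω => (q (g (V ω)), h (W ω)))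
      = mutInfo μ (fun ω => p (f (U ω))) (fun ω => (q (g (V ω)), W ω)) :=
    mutInfo_comp MeasurableEmbedding.id (MeasurableEmbedding.id.prodMap hh) μ
      (fun ω => p (f (U ω))) (fun ω => (q (g (V ω)), W ω))
  have hcond : mutInfo μ (fun ω => p (f (U ω))) (fun ω => h (W ω))
      = mutInfo μ (fun ω => p (f (U ω))) W :=
    mutInfo_comp MeasurableEmbedding.id hh μ (fun ω => p (f (U ω))) W
  refine (congrArg₂ (· - ·) hjoint hcond).trans_le ?_
  exact le_iSup_of_le k <| le_iSup_of_le l <| le_iSup_of_le (p ∘ f) <| le_iSup_of_le (q ∘ g) <|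
    le_iSup_of_le (hp.comp hf) <| le_iSup_of_le (hq.comp hg) le_rfl

theorem condMI_comp_measurableEquiv {α β γ α' β' γ' : Type*} [MeasurableSpace α]
    [MeasurableSpace β] [MeasurableSpace γ] [MeasurableSpace α'] [MeasurableSpace β']
    [MeasurableSpace γ'] (eU : α ≃ᵐ α') (eV : β ≃ᵐ β') (eW : γ ≃ᵐ γ')
    (μ : Measure Ω) [IsFiniteMeasure μ] (U : Ω → α) (V : Ω → β) (W : Ω → γ) :
    condMI μ (fun ω => eU (U ω)) (fun ω => eV (V ω)) (fun ω => eW (W ω)) = condMI μ U V W := by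
  refine le_antisymm (condMI_comp_le eU.measurable eV.measurable eW.measurableEmbedding μ U V W) ?_
  have h := condMI_comp_le eU.symm.measurable eV.symm.measurable eW.symm.measurableEmbedding μ
    (fun ω => eU (U ω)) (fun ω => eV (V ω)) (fun ω => eW (W ω))
  simpa only [MeasurableEquiv.symm_apply_apply] using h

theorem _root_.StrictMonoOn.invFunOn {α β : Type*} [LinearOrder α] [Preorder β] [Nonempty α]
    {f : α → β} {s : Set α} {t : Set β} (hf : StrictMonoOn f s) (hsurj : SurjOn f s t) :
    StrictMonoOn (Function.invFunOn f s) t := fun x hx y hy hxy =>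
  (hf.lt_iff_lt (hsurj.mapsTo_invFunOn hx) (hsurj.mapsTo_invFunOn hy)).mp <| by
    rwa [hsurj.rightInvOn_invFunOn hx, hsurj.rightInvOn_invFunOn hy]

namespace Partn

variable {a b : ℝ}

theorem strictMonoOn (P : Partn a b) : StrictMonoOn P.t (Iic P.n) :=
  strictMonoOn_Iic_of_lt_succ P.mono

theorem t_mem_Icc (P : Partn a b) {i : ℕ} (hi : i ≤ P.n) : P.t i ∈ Icc a b :=
  ⟨P.first.symm.le.trans <|
      P.strictMonoOn.monotoneOn (mem_Iic.2 (Nat.zero_le _)) (mem_Iic.2 hi) (Nat.zero_le i),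
    (P.strictMonoOn.monotoneOn (mem_Iic.2 hi) (mem_Iic.2 le_rfl) hi).trans P.last.le⟩

def map (P : Partn a b) {φ : ℝ → ℝ} (hφ : StrictMonoOn φ (Icc a b)) : Partn (φ a) (φ b) where
  n := P.n
  t i := φ (P.t i)
  mono i hi := hφ (P.t_mem_Icc hi.le) (P.t_mem_Icc hi) (P.mono i hi)
  first := congrArg φ P.first
  last := congrArg φ P.last

end Partn

section TimeChange

variable {a b : ℝ} {φ : ℝ → ℝ}

theorem bijOn_Ico_of_strictMonoOn (hφ : StrictMonoOn φ (Icc a b))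
    (hsurj : SurjOn φ (Icc a b) (Icc (φ a) (φ b))) {s u : ℝ} (hs : a ≤ s) (hsu : s ≤ u)
    (hu : u ≤ b) : BijOn φ (Ico s u) (Ico (φ s) (φ u)) := by
  have hsI : s ∈ Icc a b := ⟨hs, hsu.trans hu⟩
  have huI : u ∈ Icc a b := ⟨hs.trans hsu, hu⟩
  have hIco : Ico s u ⊆ Icc a b := fun t ht => ⟨hs.trans ht.1, ht.2.le.trans hu⟩
  refine ⟨fun t ht => ⟨?_, ?_⟩, hφ.injOn.mono hIco, fun r hr => ?_⟩
  · exact hφ.monotoneOn hsI (hIco ht) ht.1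
  · exact hφ (hIco ht) huI ht.2
  · have hrI : r ∈ Icc (φ a) (φ b) :=
      ⟨(hφ.monotoneOn ⟨le_rfl, hsI.1.trans hsI.2⟩ hsI hs).trans hr.1,
        hr.2.le.trans (hφ.monotoneOn huI ⟨huI.1.trans huI.2, le_rfl⟩ hu)⟩
    obtain ⟨t, ht, rfl⟩ := hsurj hrI
    exact ⟨t, ⟨(hφ.le_iff_le hsI ht).mp hr.1, (hφ.lt_iff_lt ht huI).mp hr.2⟩, rfl⟩

theorem restrict_timeChange {G : Type*} [MeasurableSpace G] {z z' : ℝ → G}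
    (hφ : StrictMonoOn φ (Icc a b)) (hsurj : SurjOn φ (Icc a b) (Icc (φ a) (φ b)))
    (hz : ∀ t ∈ Ico a b, z' (φ t) = z t) {s u : ℝ} (hs : a ≤ s) (hsu : s ≤ u) (hu : u ≤ b) :
    (fun r : Ico (φ s) (φ u) => z' r) =
      MeasurableEquiv.arrowCongr' (bijOn_Ico_of_strictMonoOn hφ hsurj hs hsu hu).equiv
        (.refl G) (fun t : Ico s u => z t) := by
  set e := (bijOn_Ico_of_strictMonoOn hφ hsurj hs hsu hu).equiv
  funext r
  obtain ⟨t, rfl⟩ := e.surjective r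
  change z' (φ t) = z (e.symm (e t))
  rw [e.symm_apply_apply, hz t ⟨hs.trans t.2.1, t.2.2.trans_le hu⟩]

variable {E F : Type*} [MeasurableSpace E] [MeasurableSpace F] {μ : Measure Ω} [IsFiniteMeasure μ]
  {X X' : ℝ → Ω → E} {Y Y' : ℝ → Ω → F}

theorem condMI_seg_timeChange (hφ : StrictMonoOn φ (Icc a b))
    (hsurj : SurjOn φ (Icc a b) (Icc (φ a) (φ b))) (hX : ∀ t ∈ Ico a b, X' (φ t) = X t)
    (hY : ∀ t ∈ Ico a b, Y' (φ t) = Y t) {s u : ℝ} (hs : a ≤ s) (hsu : s ≤ u) (hu : u ≤ b) :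
    condMI μ (seg Y' (φ s) (φ u)) (seg X' (φ a) (φ u)) (seg Y' (φ a) (φ s))
      = condMI μ (seg Y s u) (seg X a u) (seg Y a s) := by
  rw [show seg Y' (φ s) (φ u) = _ from funext fun ω =>
      restrict_timeChange (z := (Y · ω)) (z' := (Y' · ω)) hφ hsurj
        (fun t ht => congrFun (hY t ht) ω) hs hsu hu,
    show seg X' (φ a) (φ u) = _ from funext fun ω =>
      restrict_timeChange (z := (X · ω)) (z' := (X' · ω)) hφ hsurj
        (fun t ht => congrFun (hX t ht) ω) le_rfl (hs.trans hsu) hu,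
    show seg Y' (φ a) (φ s) = _ from funext fun ω =>
      restrict_timeChange (z := (Y · ω)) (z' := (Y' · ω)) hφ hsurj
        (fun t ht => congrFun (hY t ht) ω) le_rfl hs (hsu.trans hu)]
  exact condMI_comp_measurableEquiv _ _ _ μ (seg Y s u) (seg X a u) (seg Y a s)

theorem dInfoP_map (hφ : StrictMonoOn φ (Icc a b))
    (hsurj : SurjOn φ (Icc a b) (Icc (φ a) (φ b))) (hX : ∀ t ∈ Ico a b, X' (φ t) = X t)
    (hY : ∀ t ∈ Ico a b, Y' (φ t) = Y t) (P : Partn a b) :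
    dInfoP μ X' Y' (P.map hφ) = dInfoP μ X Y P :=
  Finset.sum_congr rfl fun i hi =>
    have hi : i < P.n := Finset.mem_range.1 hi
    condMI_seg_timeChange hφ hsurj hX hY (P.t_mem_Icc hi.le).1 (P.mono i hi).le (P.t_mem_Icc hi).2

theorem dInfo_timeChange_le (hφ : StrictMonoOn φ (Icc a b))
    (hsurj : SurjOn φ (Icc a b) (Icc (φ a) (φ b))) (hX : ∀ t ∈ Ico a b, X' (φ t) = X t)
    (hY : ∀ t ∈ Ico a b, Y' (φ t) = Y t) :
    dInfo μ X' Y' (φ a) (φ b) ≤ dInfo μ X Y a b :=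
  le_iInf fun P => (iInf_le _ (P.map hφ)).trans_eq (dInfoP_map hφ hsurj hX hY P)

theorem comp_invFunOn_timeChange {G : Type*} {z z' : ℝ → G} (hφ : StrictMonoOn φ (Icc a b))
    (hsurj : SurjOn φ (Icc a b) (Icc (φ a) (φ b))) (hz : ∀ t ∈ Ico a b, z' (φ t) = z t) :
    ∀ r ∈ Ico (φ a) (φ b), z (Function.invFunOn φ (Icc a b) r) = z' r := by
  intro r hr
  have hrI : r ∈ Icc (φ a) (φ b) := Ico_subset_Icc_self hr
  have hψr : Function.invFunOn φ (Icc a b) r ∈ Icc a b := hsurj.mapsTo_invFunOn hrI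
  have hφψr : φ (Function.invFunOn φ (Icc a b) r) = r := hsurj.rightInvOn_invFunOn hrI
  have hψr_lt : Function.invFunOn φ (Icc a b) r < b :=
    (hφ.lt_iff_lt hψr ⟨hψr.1.trans hψr.2, le_rfl⟩).mp (by rw [hφψr]; exact hr.2)
  rw [← hz _ ⟨hψr.1, hψr_lt⟩, hφψr]

theorem dInfo_timeChange (hab : a ≤ b) (hφ : StrictMonoOn φ (Icc a b))
    (hsurj : SurjOn φ (Icc a b) (Icc (φ a) (φ b))) (hX : ∀ t ∈ Ico a b, X' (φ t) = X t)
    (hY : ∀ t ∈ Ico a b, Y' (φ t) = Y t) :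
    dInfo μ X Y a b = dInfo μ X' Y' (φ a) (φ b) := by
  set ψ := Function.invFunOn φ (Icc a b)
  have hmaps : MapsTo φ (Icc a b) (Icc (φ a) (φ b)) := fun t ht =>
    ⟨hφ.monotoneOn ⟨le_rfl, hab⟩ ht ht.1, hφ.monotoneOn ht ⟨hab, le_rfl⟩ ht.2⟩
  have hψφ : LeftInvOn ψ φ (Icc a b) := hφ.injOn.leftInvOn_invFunOn
  have ha : ψ (φ a) = a := hψφ ⟨le_rfl, hab⟩
  have hb : ψ (φ b) = b := hψφ ⟨hab, le_rfl⟩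
  have hψsurj : SurjOn ψ (Icc (φ a) (φ b)) (Icc (ψ (φ a)) (ψ (φ b))) := by
    rw [ha, hb]
    exact hψφ.surjOn hmaps
  refine le_antisymm ?_ (dInfo_timeChange_le (μ := μ) hφ hsurj hX hY)
  -- the reverse inequality is the same one for the inverse time change `ψ`
  have h : dInfo μ X Y (ψ (φ a)) (ψ (φ b)) ≤ dInfo μ X' Y' (φ a) (φ b) :=
    dInfo_timeChange_le (hφ.invFunOn hsurj) hψsurj (comp_invFunOn_timeChange hφ hsurj hX)
      (comp_invFunOn_timeChange hφ hsurj hY)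
  rwa [ha, hb] at h

end TimeChange

/-- Directed information is invariant to time dilation: if `φ` is
strictly increasing and continuous on `[0,T]` and `(X̃_{φ(t)}, Ỹ_{φ(t)}) = (X_t, Y_t)`,
then `I(X_0^T → Y_0^T) = I(X̃_{φ(0)}^{φ(T)} → Ỹ_{φ(0)}^{φ(T)})`; in particular, for
`α > 0`, `I(X̃_0^{T/α} → Ỹ_0^{T/α}) = I(X_0^T → Y_0^T)` where `X̃_t = X_{tα}`,
`Ỹ_t = Y_{tα}`. -/
theorem dInfo_time_dilation {E F : Type*} [MeasurableSpace E] [MeasurableSpace F]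
    (μ : Measure Ω) [IsProbabilityMeasure μ] (T : ℝ) (hT : 0 < T)
    (X X' : ℝ → Ω → E) (Y Y' : ℝ → Ω → F) (φ : ℝ → ℝ)
    (hφmono : StrictMonoOn φ (Icc 0 T)) (hφcont : ContinuousOn φ (Icc 0 T))
    (hX' : ∀ t, 0 ≤ t → t < T → ∀ ω, X' (φ t) ω = X t ω)
    (hY' : ∀ t, 0 ≤ t → t < T → ∀ ω, Y' (φ t) ω = Y t ω) :
    dInfo μ X Y 0 T = dInfo μ X' Y' (φ 0) (φ T) ∧
      ∀ α : ℝ, 0 < α →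
        dInfo μ (fun t ω => X (t * α) ω) (fun t ω => Y (t * α) ω) 0 (T / α)
          = dInfo μ X Y 0 T := by
  refine ⟨dInfo_timeChange hT.le hφmono (intermediate_value_Icc hT.le hφcont)
    (fun t ht => funext (hX' t ht.1 ht.2)) (fun t ht => funext (hY' t ht.1 ht.2)), fun α hα => ?_⟩
  have hTα : 0 ≤ T / α := (div_pos hT hα).le
  have h := dInfo_timeChange (φ := (· * α)) (X' := X) (Y' := Y) (μ := μ) hTα
    ((strictMono_mul_right_of_pos hα).strictMonoOn _)
    (intermediate_value_Icc hTα (continuous_mul_const α).continuousOn)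
    (fun _ _ => rfl) (fun _ _ => rfl)
  rwa [zero_mul, div_mul_cancel₀ T hα.ne'] at h

end CTDI
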